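/- The moonshine code D^♮ = (S^♮)^⊥ equals {(α, β, γ) : α, β, γ ∈ F_2^16 even and α + β + γ ∈ D_{E8}}, where D_{E8} = S_{E8}^⊥; it has dimension 41, contains the direct sum D_{E8} ⊕ D_{E8} ⊕ D_{E8}, and contains no codeword of Hamming weight 2. -/
import Mathlib


/-- The all-ones word `(1^16)`. -/
def w16All : Fin 16 → ZMod 2 := fun _ => 1

/-- The word `(0^8 1^8)`. -/
def w16Half : Fin 16 → ZMod 2 := fun i => if 8 ≤ i.val then 1 else 0

/-- The word `(0^4 1^4 0^4 1^4)`. -/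
def w16Quarter : Fin 16 → ZMod 2 := fun i => if 4 ≤ i.val % 8 then 1 else 0

/-- The word `(0^2 1^2)` repeated 4 times. -/
def w16Eighth : Fin 16 → ZMod 2 := fun i => if 2 ≤ i.val % 4 then 1 else 0

/-- The word `(01)` repeated 8 times. -/
def w16Alt : Fin 16 → ZMod 2 := fun i => if 1 ≤ i.val % 2 then 1 else 0

/-- The code `S_{E8}`: the binary linear code of length 16 spanned by
`(1^16)`, `(0^8 1^8)`, `(0^4 1^4 0^4 1^4)`, `((0^2 1^2)^4)` and `((01)^8)`. -/
def SE8 : Submodule (ZMod 2) (Fin 16 → ZMod 2) :=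
  Submodule.span (ZMod 2) {w16All, w16Half, w16Quarter, w16Eighth, w16Alt}

/-- The dual code `C^⊥ = {γ : Σ_i γ_i α_i = 0 for all α ∈ C}` of a binary code `C`
of length `n`. -/
def dualCode {n : ℕ} (C : Set (Fin n → ZMod 2)) : Submodule (ZMod 2) (Fin n → ZMod 2) where
  carrier := {c | ∀ a ∈ C, ∑ i, c i * a i = 0}
  add_mem' := by
    intro x y hx hy a ha
    have hx' := hx a ha
    have hy' := hy a ha
    simp only [Set.mem_setOf_eq, Pi.add_apply, add_mul, Finset.sum_add_distrib, hx', hy',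
      add_zero]
  zero_mem' := by
    intro a ha
    simp
  smul_mem' := by
    intro m x hx a ha
    have hx' := hx a ha
    calc ∑ i, (m • x) i * a i = m * ∑ i, x i * a i := by
          simp [Finset.mul_sum, mul_assoc]
      _ = 0 := by rw [hx', mul_zero]

/-- The code `D_{E8} = S_{E8}^⊥`. -/
def DE8 : Submodule (ZMod 2) (Fin 16 → ZMod 2) := dualCode (SE8 : Set (Fin 16 → ZMod 2))


/-- Words of length 48 written as triples of blocks of length 16. -/
abbrev Word48 : Type := Fin 3 → Fin 16 → ZMod 2

/-- The moonshine code `S^♮`: the binary linear code of length 48 spanned by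
`(1^16,0^16,0^16)`, `(0^16,1^16,0^16)`, `(0^16,0^16,1^16)` and all `(α,α,α)`
with `α ∈ S_{E8}`. -/
def Snat : Submodule (ZMod 2) Word48 :=
  Submodule.span (ZMod 2)
    ({![w16All, 0, 0], ![0, w16All, 0], ![0, 0, w16All]} ∪
      {w | ∃ α ∈ SE8, w = ![α, α, α]})

/-- The dual code of a binary code of length 48 (written in blocks). -/
def dualCode48 (C : Set Word48) : Submodule (ZMod 2) Word48 where
  carrier := {w | ∀ u ∈ C, ∑ b, ∑ i, w b i * u b i = 0}
  add_mem' := by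
    intro x y hx hy u hu
    have hx' := hx u hu
    have hy' := hy u hu
    simp only [Set.mem_setOf_eq, Pi.add_apply, add_mul, Finset.sum_add_distrib, hx', hy',
      add_zero]
  zero_mem' := by
    intro u hu
    simp
  smul_mem' := by
    intro m x hx u hu
    have hx' := hx u hu
    calc ∑ b, ∑ i, (m • x) b i * u b i = m * ∑ b, ∑ i, x b i * u b i := by
          simp [Finset.mul_sum, mul_assoc]
      _ = 0 := by rw [hx', mul_zero]

/-- The moonshine code `D^♮ = (S^♮)^⊥`. -/
def Dnat : Submodule (ZMod 2) Word48 := dualCode48 (Snat : Set Word48)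

/-! ### Auxiliary material -/

section Aux

/-- Dot-product functional, linear in the second argument. -/
def dotL {n : ℕ} (v : Fin n → ZMod 2) : (Fin n → ZMod 2) →ₗ[ZMod 2] ZMod 2 :=
  ∑ i, v i • LinearMap.proj i

lemma dotL_apply {n : ℕ} (v u : Fin n → ZMod 2) : dotL v u = ∑ i, v i * u i := by
  simp [dotL]

lemma mem_DE8_iff (v : Fin 16 → ZMod 2) :
    v ∈ DE8 ↔ ((∑ i, v i = 0) ∧ (∑ i, v i * w16Half i = 0) ∧ (∑ i, v i * w16Quarter i = 0) ∧
      (∑ i, v i * w16Eighth i = 0) ∧ (∑ i, v i * w16Alt i = 0)) := by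
  constructor
  · intro h
    refine ⟨?_, ?_, ?_, ?_, ?_⟩
    · have := h w16All (Submodule.subset_span (by simp))
      simpa [w16All] using this
    · exact h w16Half (Submodule.subset_span (by simp))
    · exact h w16Quarter (Submodule.subset_span (by simp))
    · exact h w16Eighth (Submodule.subset_span (by simp))
    · exact h w16Alt (Submodule.subset_span (by simp))
  · rintro ⟨h1, h2, h3, h4, h5⟩ a ha
    have hle : SE8 ≤ LinearMap.ker (dotL v) := by
      rw [SE8, Submodule.span_le]
      rintro a (rfl | rfl | rfl | rfl | rfl) <;>
        simp only [SetLike.mem_coe, LinearMap.mem_ker, dotL_apply]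
      · simpa [w16All] using h1
      · exact h2
      · exact h3
      · exact h4
      · exact h5
    have := hle ha
    rwa [LinearMap.mem_ker, dotL_apply] at this

/-- The 48-bit dot functional, linear in the second argument. -/
def dot48L (w : Word48) : Word48 →ₗ[ZMod 2] ZMod 2 :=
  ∑ b, ∑ i, w b i •
    ((LinearMap.proj i : (Fin 16 → ZMod 2) →ₗ[ZMod 2] ZMod 2).comp
      (LinearMap.proj b : Word48 →ₗ[ZMod 2] (Fin 16 → ZMod 2)))

lemma dot48L_apply (w u : Word48) : dot48L w u = ∑ b, ∑ i, w b i * u b i := by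
  simp [dot48L]

lemma mem_Dnat_iff (w : Word48) :
    w ∈ Dnat ↔ ((∑ i, w 0 i = 0) ∧ (∑ i, w 1 i = 0) ∧ (∑ i, w 2 i = 0) ∧
      w 0 + w 1 + w 2 ∈ DE8) := by
  constructor
  · intro h
    refine ⟨?_, ?_, ?_, ?_⟩
    · have hmem : (![w16All, 0, 0] : Word48) ∈ Snat :=
        Submodule.subset_span (Set.mem_union_left _ (by simp))
      have h2 := h ![w16All, 0, 0] hmem
      rw [Fin.sum_univ_three, show (![w16All, 0, 0] : Word48) 0 = w16All from rfl,
        show (![w16All, 0, 0] : Word48) 1 = 0 from rfl,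
        show (![w16All, 0, 0] : Word48) 2 = 0 from rfl] at h2
      simpa [w16All] using h2
    · have hmem : (![0, w16All, 0] : Word48) ∈ Snat :=
        Submodule.subset_span (Set.mem_union_left _ (by simp))
      have h2 := h ![0, w16All, 0] hmem
      rw [Fin.sum_univ_three, show (![0, w16All, 0] : Word48) 0 = 0 from rfl,
        show (![0, w16All, 0] : Word48) 1 = w16All from rfl,
        show (![0, w16All, 0] : Word48) 2 = 0 from rfl] at h2
      simpa [w16All] using h2
    · have hmem : (![0, 0, w16All] : Word48) ∈ Snat :=
        Submodule.subset_span (Set.mem_union_left _ (by simp))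
      have h2 := h ![0, 0, w16All] hmem
      rw [Fin.sum_univ_three, show (![0, 0, w16All] : Word48) 0 = 0 from rfl,
        show (![0, 0, w16All] : Word48) 1 = 0 from rfl,
        show (![0, 0, w16All] : Word48) 2 = w16All from rfl] at h2
      simpa [w16All] using h2
    · intro a ha
      have hmem : (![a, a, a] : Word48) ∈ Snat :=
        Submodule.subset_span (Set.mem_union_right _ ⟨a, ha, rfl⟩)
      have h2 := h ![a, a, a] hmem
      rw [Fin.sum_univ_three, show (![a, a, a] : Word48) 0 = a from rfl,
        show (![a, a, a] : Word48) 1 = a from rfl,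
        show (![a, a, a] : Word48) 2 = a from rfl] at h2
      simpa [Pi.add_apply, add_mul, Finset.sum_add_distrib] using h2
  · rintro ⟨h0, h1, h2, hD⟩ u hu
    have hle : Snat ≤ LinearMap.ker (dot48L w) := by
      rw [Snat, Submodule.span_le]
      rintro u (hu' | ⟨a, ha, rfl⟩)
      · rcases hu' with rfl | rfl | rfl <;>
          simp only [SetLike.mem_coe, LinearMap.mem_ker, dot48L_apply, Fin.sum_univ_three]
        · rw [show (![w16All, 0, 0] : Word48) 0 = w16All from rfl,
            show (![w16All, 0, 0] : Word48) 1 = 0 from rfl,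
            show (![w16All, 0, 0] : Word48) 2 = 0 from rfl]
          simpa [w16All] using h0
        · rw [show (![0, w16All, 0] : Word48) 0 = 0 from rfl,
            show (![0, w16All, 0] : Word48) 1 = w16All from rfl,
            show (![0, w16All, 0] : Word48) 2 = 0 from rfl]
          simpa [w16All] using h1
        · rw [show (![0, 0, w16All] : Word48) 0 = 0 from rfl,
            show (![0, 0, w16All] : Word48) 1 = 0 from rfl,
            show (![0, 0, w16All] : Word48) 2 = w16All from rfl]
          simpa [w16All] using h2
      · simp only [SetLike.mem_coe, LinearMap.mem_ker, dot48L_apply, Fin.sum_univ_three]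
        rw [show (![a, a, a] : Word48) 0 = a from rfl, show (![a, a, a] : Word48) 1 = a from rfl,
          show (![a, a, a] : Word48) 2 = a from rfl]
        have := hD a ha
        simpa [Pi.add_apply, add_mul, Finset.sum_add_distrib] using this
    have := hle hu
    rwa [LinearMap.mem_ker, dot48L_apply] at this

lemma sum_eq_cast_hammingNorm {n : ℕ} (v : Fin n → ZMod 2) :
    (∑ i, v i) = (hammingNorm v : ZMod 2) := by
  rw [hammingNorm, ← Finset.sum_filter_of_ne (p := fun i => v i ≠ 0) (by intro x _ h; exact h)]
  rw [Finset.sum_congr rfl (fun x hx => show v x = 1 by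
    have := (Finset.mem_filter.1 hx).2
    revert this; generalize v x = a; revert a; decide)]
  simp

lemma sum_eq_zero_iff_even {n : ℕ} (v : Fin n → ZMod 2) :
    (∑ i, v i) = 0 ↔ Even (hammingNorm v) := by
  rw [sum_eq_cast_hammingNorm, ZMod.natCast_eq_zero_iff]
  exact even_iff_two_dvd.symm

end Aux


section Aux2

lemma gens_separate : ∀ i j : Fin 16, i ≠ j →
    ¬(w16Half i = w16Half j ∧ w16Quarter i = w16Quarter j ∧ w16Eighth i = w16Eighth j ∧
      w16Alt i = w16Alt j) := by decide

lemma zmod2_ne_zero : ∀ a : ZMod 2, a ≠ 0 → a = 1 := by decide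

lemma DE8_no_wt2 : ∀ v ∈ DE8, hammingNorm v ≠ 2 := by
  intro v hv h2
  rw [hammingNorm] at h2
  obtain ⟨i, j, hij, hset⟩ := Finset.card_eq_two.1 h2
  have hvi : v i = 1 := by
    apply zmod2_ne_zero
    have : i ∈ Finset.filter (fun k => v k ≠ 0) Finset.univ := by
      rw [hset]; exact Finset.mem_insert_self _ _
    exact (Finset.mem_filter.1 this).2
  have hvj : v j = 1 := by
    apply zmod2_ne_zero
    have : j ∈ Finset.filter (fun k => v k ≠ 0) Finset.univ := by
      rw [hset]; exact Finset.mem_insert_of_mem (Finset.mem_singleton_self _)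
    exact (Finset.mem_filter.1 this).2
  have key : ∀ g : Fin 16 → ZMod 2, (∑ k, v k * g k) = g i + g j := by
    intro g
    rw [← Finset.sum_filter_of_ne (p := fun k => v k ≠ 0)
      (fun x _ hx h0 => hx (by rw [h0, zero_mul]))]
    rw [hset, Finset.sum_pair hij, hvi, hvj, one_mul, one_mul]
  obtain ⟨-, d1, d2, d3, d4⟩ := (mem_DE8_iff v).1 hv
  rw [key] at d1 d2 d3 d4
  have addz : ∀ a b : ZMod 2, a + b = 0 → a = b := by decide
  exact gens_separate i j hij ⟨addz _ _ d1, addz _ _ d2, addz _ _ d3, addz _ _ d4⟩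

/-- Parity functional on block `b`. -/
def parF (b : Fin 3) : Word48 →ₗ[ZMod 2] ZMod 2 where
  toFun w := ∑ i, w b i
  map_add' x y := by simp [Finset.sum_add_distrib]
  map_smul' m x := by simp [Finset.mul_sum]

/-- Dot of the block-sum with a fixed word `g`. -/
def qdF (g : Fin 16 → ZMod 2) : Word48 →ₗ[ZMod 2] ZMod 2 where
  toFun w := ∑ i, (w 0 + w 1 + w 2) i * g i
  map_add' x y := by
    simp only [Pi.add_apply]
    rw [← Finset.sum_add_distrib]
    refine Finset.sum_congr rfl fun i _ => by ring
  map_smul' m x := by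
    simp only [Pi.smul_apply, smul_eq_mul, RingHom.id_apply]
    rw [Finset.mul_sum]
    refine Finset.sum_congr rfl fun i _ => by
      simp only [Pi.add_apply, Pi.smul_apply, smul_eq_mul]; ring

/-- The seven check functionals cutting out `D^♮`. -/
def phiF : Fin 7 → (Word48 →ₗ[ZMod 2] ZMod 2) := fun j =>
  if j.val = 0 then parF 0 else if j.val = 1 then parF 1 else if j.val = 2 then parF 2
  else if j.val = 3 then qdF w16Half else if j.val = 4 then qdF w16Quarter
  else if j.val = 5 then qdF w16Eighth else qdF w16Alt

/-- The check map whose kernel is `D^♮`. -/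
def phiM : Word48 →ₗ[ZMod 2] (Fin 7 → ZMod 2) := LinearMap.pi phiF

lemma mem_ker_phiM (w : Word48) : w ∈ LinearMap.ker phiM ↔ w ∈ Dnat := by
  rw [LinearMap.mem_ker, mem_Dnat_iff, mem_DE8_iff, funext_iff]
  simp only [Pi.zero_apply]
  have e0 : phiM w 0 = ∑ i, w 0 i := rfl
  have e1 : phiM w 1 = ∑ i, w 1 i := rfl
  have e2 : phiM w 2 = ∑ i, w 2 i := rfl
  have e3 : phiM w 3 = ∑ i, (w 0 + w 1 + w 2) i * w16Half i := rfl
  have e4 : phiM w 4 = ∑ i, (w 0 + w 1 + w 2) i * w16Quarter i := rfl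
  have e5 : phiM w 5 = ∑ i, (w 0 + w 1 + w 2) i * w16Eighth i := rfl
  have e6 : phiM w 6 = ∑ i, (w 0 + w 1 + w 2) i * w16Alt i := rfl
  constructor
  · intro h
    have h0 := h 0; have h1 := h 1; have h2 := h 2
    have h3 := h 3; have h4 := h 4; have h5 := h 5; have h6 := h 6
    rw [e0] at h0; rw [e1] at h1; rw [e2] at h2; rw [e3] at h3; rw [e4] at h4
    rw [e5] at h5; rw [e6] at h6
    refine ⟨h0, h1, h2, ?_, h3, h4, h5, h6⟩
    simp only [Pi.add_apply, Finset.sum_add_distrib, h0, h1, h2, add_zero]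
  · rintro ⟨h0, h1, h2, -, h3, h4, h5, h6⟩ j
    fin_cases j
    · rw [show phiM w ⟨0, by norm_num⟩ = ∑ i, w 0 i from rfl]; exact h0
    · rw [show phiM w ⟨1, by norm_num⟩ = ∑ i, w 1 i from rfl]; exact h1
    · rw [show phiM w ⟨2, by norm_num⟩ = ∑ i, w 2 i from rfl]; exact h2
    · rw [show phiM w ⟨3, by norm_num⟩ = ∑ i, (w 0 + w 1 + w 2) i * w16Half i from rfl]; exact h3
    · rw [show phiM w ⟨4, by norm_num⟩ = ∑ i, (w 0 + w 1 + w 2) i * w16Quarter i from rfl]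
      exact h4
    · rw [show phiM w ⟨5, by norm_num⟩ = ∑ i, (w 0 + w 1 + w 2) i * w16Eighth i from rfl]
      exact h5
    · rw [show phiM w ⟨6, by norm_num⟩ = ∑ i, (w 0 + w 1 + w 2) i * w16Alt i from rfl]; exact h6

/-- A delta word. -/
def del (k : Fin 16) : Fin 16 → ZMod 2 := fun i => if i = k then 1 else 0

/-- Preimages of the standard basis under `phiM`. -/
def vv : Fin 7 → Word48 :=
  ![![del 0, 0, 0], ![0, del 0, 0], ![0, 0, del 0], ![del 0 + del 8, 0, 0],
    ![del 0 + del 4, 0, 0], ![del 0 + del 2, 0, 0], ![del 0 + del 1, 0, 0]]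

lemma phiM_vv : ∀ j k : Fin 7, phiM (vv j) k = (if k = j then 1 else 0) := by decide

lemma phiM_surjective : Function.Surjective phiM := by
  intro t
  refine ⟨∑ j, t j • vv j, funext fun k => ?_⟩
  have : phiM (∑ j, t j • vv j) k = ∑ j, t j * phiM (vv j) k := by
    rw [map_sum]
    simp [Finset.sum_apply]
  rw [this]
  simp only [phiM_vv, mul_ite, mul_one, mul_zero]
  simp [Finset.sum_ite_eq]

end Aux2

/-- The moonshine code `D^♮ = (S^♮)^⊥` equals
`{(α,β,γ) : α,β,γ even and α+β+γ ∈ D_{E8}}`, has dimension 41, contains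
`D_{E8} ⊕ D_{E8} ⊕ D_{E8}`, and contains no codeword of Hamming weight 2. -/


theorem Dnat_description :
    ((Dnat : Set Word48) =
      {w | (∀ b, Even (hammingNorm (w b))) ∧ w 0 + w 1 + w 2 ∈ DE8}) ∧
    Module.finrank (ZMod 2) Dnat = 41 ∧
    (∀ α β γ : Fin 16 → ZMod 2, α ∈ DE8 → β ∈ DE8 → γ ∈ DE8 → ![α, β, γ] ∈ Dnat) ∧
    (∀ w ∈ Dnat, (∑ b, hammingNorm (w b)) ≠ 2) := by
  have hset : (Dnat : Set Word48) =
      {w | (∀ b, Even (hammingNorm (w b))) ∧ w 0 + w 1 + w 2 ∈ DE8} := by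
    ext w
    simp only [SetLike.mem_coe, Set.mem_setOf_eq]
    rw [mem_Dnat_iff]
    constructor
    · rintro ⟨h0, h1, h2, hD⟩
      refine ⟨?_, hD⟩
      intro b
      fin_cases b
      · exact (sum_eq_zero_iff_even (w 0)).1 h0
      · exact (sum_eq_zero_iff_even (w 1)).1 h1
      · exact (sum_eq_zero_iff_even (w 2)).1 h2
    · rintro ⟨he, hD⟩
      exact ⟨(sum_eq_zero_iff_even (w 0)).2 (he 0), (sum_eq_zero_iff_even (w 1)).2 (he 1),
        (sum_eq_zero_iff_even (w 2)).2 (he 2), hD⟩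
  refine ⟨hset, ?_, ?_, ?_⟩
  · have hker : LinearMap.ker phiM = Dnat := Submodule.ext mem_ker_phiM
    have h1 := LinearMap.finrank_range_add_finrank_ker phiM
    rw [LinearMap.range_eq_top.2 phiM_surjective, finrank_top, hker] at h1
    have hdom : Module.finrank (ZMod 2) Word48 = 48 := by
      rw [Module.finrank_pi_fintype]
      simp [Module.finrank_pi]
    have hcod : Module.finrank (ZMod 2) (Fin 7 → ZMod 2) = 7 := by
      simp [Module.finrank_pi]
    rw [hdom, hcod] at h1
    omega
  · intro alpha beta gamma ha hb hc
    rw [mem_Dnat_iff, show (![alpha, beta, gamma] : Word48) 0 = alpha from rfl,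
      show (![alpha, beta, gamma] : Word48) 1 = beta from rfl,
      show (![alpha, beta, gamma] : Word48) 2 = gamma from rfl]
    exact ⟨((mem_DE8_iff alpha).1 ha).1, ((mem_DE8_iff beta).1 hb).1,
      ((mem_DE8_iff gamma).1 hc).1, add_mem (add_mem ha hb) hc⟩
  · intro w hw hsum
    obtain ⟨h0, h1, h2, hD⟩ := (mem_Dnat_iff w).1 hw
    rw [Fin.sum_univ_three] at hsum
    obtain ⟨a0, ha0⟩ := (sum_eq_zero_iff_even (w 0)).1 h0
    obtain ⟨a1, ha1⟩ := (sum_eq_zero_iff_even (w 1)).1 h1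
    obtain ⟨a2, ha2⟩ := (sum_eq_zero_iff_even (w 2)).1 h2
    have hcase : (hammingNorm (w 0) = 2 ∧ hammingNorm (w 1) = 0 ∧ hammingNorm (w 2) = 0) ∨
        (hammingNorm (w 0) = 0 ∧ hammingNorm (w 1) = 2 ∧ hammingNorm (w 2) = 0) ∨
        (hammingNorm (w 0) = 0 ∧ hammingNorm (w 1) = 0 ∧ hammingNorm (w 2) = 2) := by
      omega
    rcases hcase with ⟨c0, c1, c2⟩ | ⟨c0, c1, c2⟩ | ⟨c0, c1, c2⟩
    · rw [hammingNorm_eq_zero.1 c1, hammingNorm_eq_zero.1 c2, add_zero, add_zero] at hD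
      exact DE8_no_wt2 _ hD c0
    · rw [hammingNorm_eq_zero.1 c0, hammingNorm_eq_zero.1 c2, zero_add, add_zero] at hD
      exact DE8_no_wt2 _ hD c1
    · rw [hammingNorm_eq_zero.1 c0, hammingNorm_eq_zero.1 c1, zero_add, zero_add] at hD
      exact DE8_no_wt2 _ hD c2
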